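/- Let Λ ⊆ Σ_A^Z be a two-sided shift space and Ξ^[M] : Σ_A^Z → Σ_{A^[M]}^Z the M-th higher block code, where (Ξ^[M](x))_i = ø if x_i = ø and equals the block [x_{i−M+1} … x_i] otherwise. Then Ξ^[M] restricted to Λ is continuous and injective, its inverse on its image is a 1-block code, and Ξ^[M](Λ) is a two-sided shift space over the alphabet A^[M] = B_M(Σ_A^Z). -/

import Mathlib

open Set Topology Filter TopologicalSpace

universe u

/-- The two-sided full shift over `A`: sequences over `A ∪ {ø}` (with `ø = none`)
in which the empty letter propagates to the right. -/
def SigmaZ (A : Type u) : Type u :=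
  {x : ℤ → Option A // ∀ i, x i = none → x (i + 1) = none}

namespace SigmaZ

variable {A : Type u}

/-- The generalized cylinder `Z(x, F)`, where the finite nonempty sequence `x` is
encoded by its length `k` and its letters `w i` for `i ≤ k`. -/
def cyl (k : ℤ) (w : ℤ → A) (F : Finset A) : Set (SigmaZ A) :=
  {y | (∀ i ≤ k, y.1 i = some (w i)) ∧ ∀ a ∈ F, y.1 (k + 1) ≠ some a}

/-- Generalized cylinders together with complements of finite unions of cylinders `Z(x)`. -/
def basicSets (A : Type u) : Set (Set (SigmaZ A)) :=
  {s | (∃ (k : ℤ) (w : ℤ → A) (F : Finset A), s = cyl k w F) ∨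
    ∃ (n : ℕ) (ks : Fin n → ℤ) (ws : Fin n → ℤ → A),
      s = (⋃ j, cyl (ks j) (ws j) ∅)ᶜ}

instance : TopologicalSpace (SigmaZ A) :=
  TopologicalSpace.generateFrom (basicSets A)

/-- The empty sequence `Ø`. -/
def emptySeq (A : Type u) : SigmaZ A := ⟨fun _ => none, fun _ _ => rfl⟩

/-- The shift map. -/
def shift (x : SigmaZ A) : SigmaZ A :=
  ⟨fun i => x.1 (i + 1), fun i h => x.2 (i + 1) h⟩

end SigmaZ

namespace SigmaZ

variable {A : Type u}

/-- A two-sided shift space: a closed, shift-invariant subset in which the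
infinite sequences (those with no empty letter) are dense. -/
def IsShiftSpace (Lam : Set (SigmaZ A)) : Prop :=
  IsClosed Lam ∧ shift '' Lam = Lam ∧
    Lam ⊆ closure {x ∈ Lam | ∀ i, x.1 i ≠ none}

end SigmaZ

namespace SigmaZ

variable {A : Type u}

/-- The empty letter propagates to the right. -/
theorem none_mono (x : SigmaZ A) {i j : ℤ} (h : i ≤ j) (hi : x.1 i = none) :
    x.1 j = none := by
  have key : ∀ n : ℕ, x.1 (i + n) = none := by
    intro n
    induction n with
    | zero => simpa using hi
    | succ m ih =>
        have h3 : i + ((m + 1 : ℕ) : ℤ) = (i + m) + 1 := by push_cast; ring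
        rw [h3]
        exact x.2 _ ih
  obtain ⟨n, rfl⟩ := Int.le.dest h
  exact key n

/-- The alphabet `A^[M] = B_M(Σ_A^ℤ)` of blocks of length `M` over `A ∪ {ø}`
occurring in the full shift. -/
def HBAlphabet (A : Type u) (M : ℕ) : Type u :=
  {w : Fin M → Option A // ∀ i j : Fin M, i ≤ j → w i = none → w j = none}

/-- The `M`-th higher block code `Ξ^[M]`: `(Ξ^[M] x)_i = ø` if `x_i = ø`, and
`(Ξ^[M] x)_i = [x_{i-M+1} … x_i]` otherwise. -/
def higherBlock (M : ℕ) (x : SigmaZ A) : SigmaZ (HBAlphabet A M) :=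
  ⟨fun i =>
    if (x.1 i).isSome then
      some ⟨fun j => x.1 (i - M + 1 + (j : ℕ)),
        fun j j' hjj' hnone => by
          refine none_mono x ?_ hnone
          have hv : (j : ℕ) ≤ (j' : ℕ) := hjj'
          omega⟩
    else none,
   fun i h => by
    by_cases hx : (x.1 i).isSome
    · simp [hx] at h
    · have h0 : x.1 i = none := Option.not_isSome_iff_eq_none.mp hx
      have h1 : x.1 (i + 1) = none := x.2 i h0
      simp [h1]⟩

section Aux

variable {A : Type u} {M : ℕ}

instance : Inhabited (HBAlphabet A M) :=
  ⟨⟨fun _ => none, fun _ _ _ _ => rfl⟩⟩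

lemma isOpen_basic {s : Set (SigmaZ A)} (hs : s ∈ basicSets A) : IsOpen s :=
  TopologicalSpace.isOpen_generateFrom_of_mem hs

lemma isOpen_cyl (k : ℤ) (w : ℤ → A) (F : Finset A) : IsOpen (cyl k w F) :=
  isOpen_basic (Or.inl ⟨k, w, F, rfl⟩)

lemma isClosed_cyl_empty (k : ℤ) (w : ℤ → A) : IsClosed (cyl k w (∅ : Finset A)) := by
  rw [← isOpen_compl_iff]
  exact isOpen_basic (Or.inr ⟨1, fun _ => k, fun _ => w, by rw [Set.iUnion_const]⟩)

lemma isSome_mono (y : SigmaZ A) {i j : ℤ} (h : i ≤ j) (hj : (y.1 j).isSome) :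
    (y.1 i).isSome := by
  cases hi : y.1 i with
  | none => rw [none_mono y h hi] at hj; simp at hj
  | some a => simp

lemma pin_eq_cyl [Nonempty A] (k : ℤ) (y : SigmaZ A) (hy : (y.1 k).isSome) (G : Finset A) :
    {z : SigmaZ A | (∀ j ≤ k, z.1 j = y.1 j) ∧ ∀ a ∈ G, z.1 (k + 1) ≠ some a} =
      cyl k (fun j => (y.1 j).getD (Classical.arbitrary A)) G := by
  have hv : ∀ i ≤ k, y.1 i = some ((y.1 i).getD (Classical.arbitrary A)) := by
    intro i hi
    obtain ⟨a, ha⟩ := Option.isSome_iff_exists.mp (isSome_mono y hi hy)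
    simp [ha]
  ext z
  constructor
  · rintro ⟨h1, h2⟩
    exact ⟨fun i hi => (h1 i hi).trans (hv i hi), h2⟩
  · rintro ⟨h1, h2⟩
    exact ⟨fun i hi => (h1 i hi).trans (hv i hi).symm, h2⟩

lemma isOpen_pin [Nonempty A] (k : ℤ) (y : SigmaZ A) (hy : (y.1 k).isSome) (G : Finset A) :
    IsOpen {z : SigmaZ A | (∀ j ≤ k, z.1 j = y.1 j) ∧ ∀ a ∈ G, z.1 (k + 1) ≠ some a} := by
  rw [pin_eq_cyl k y hy G]; exact isOpen_cyl _ _ _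

lemma hb_none_iff (x : SigmaZ A) (i : ℤ) :
    (higherBlock M x).1 i = none ↔ x.1 i = none := by
  cases hx : x.1 i <;> simp [higherBlock, hx]

lemma hb_isSome_iff (x : SigmaZ A) (i : ℤ) :
    ((higherBlock M x).1 i).isSome ↔ (x.1 i).isSome := by
  cases hx : x.1 i
  · simp [higherBlock, hx]
  · simp [higherBlock, hx]; rfl

lemma hb_eq_some_iff (x : SigmaZ A) (i : ℤ) (b : HBAlphabet A M) :
    (higherBlock M x).1 i = some b ↔
      ((x.1 i).isSome ∧ ∀ j : Fin M, b.1 j = x.1 (i - M + 1 + (j : ℕ))) := by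
  by_cases hx : (x.1 i).isSome
  · have : (higherBlock M x).1 i =
        some ⟨fun j => x.1 (i - M + 1 + (j : ℕ)), fun j j' hjj' hnone =>
          none_mono x (by have hv : (j : ℕ) ≤ (j' : ℕ) := hjj'; omega) hnone⟩ := by
      simp only [higherBlock, hx, if_true]
    rw [this]
    simp only [Option.some.injEq, hx, true_and]
    constructor
    · intro hbe; obtain rfl := Option.some.inj hbe
      intro j; rfl
    · intro h
      exact congrArg some (Subtype.ext (funext fun j => (h j).symm))
  · have h0 : (higherBlock M x).1 i = none := by
      simp [higherBlock, hx]
    rw [h0]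
    simp [hx]

lemma hb_bind_last (hM : 1 ≤ M) (x : SigmaZ A) (i : ℤ) :
    ((higherBlock M x).1 i).bind (fun w => w.1 ⟨M - 1, Nat.sub_lt hM Nat.one_pos⟩) = x.1 i := by
  cases hx : x.1 i with
  | none =>
    rw [(hb_none_iff x i).mpr hx]
    rfl
  | some a =>
    have hs : ((higherBlock M x).1 i).isSome := (hb_isSome_iff x i).mpr (by simp [hx])
    obtain ⟨b, hb⟩ := Option.isSome_iff_exists.mp hs
    rw [hb]
    have h2 : b.1 ⟨M - 1, by omega⟩ = x.1 (i - (M : ℤ) + 1 + ((M - 1 : ℕ) : ℤ)) :=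
      ((hb_eq_some_iff x i b).mp hb).2 ⟨M - 1, by omega⟩
    have hidx : i - (M : ℤ) + 1 + ((M - 1 : ℕ) : ℤ) = i := by omega
    show b.1 ⟨M - 1, by omega⟩ = some a
    rw [h2, hidx, hx]

lemma hb_agree {x x' : SigmaZ A} {k : ℤ} (h : ∀ j ≤ k, x.1 j = x'.1 j)
    {i : ℤ} (hik : i ≤ k) : (higherBlock M x).1 i = (higherBlock M x').1 i := by
  cases hx : x'.1 i with
  | none =>
    rw [(hb_none_iff x i).mpr (by rw [h i hik, hx]), (hb_none_iff x' i).mpr hx]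
  | some a =>
    have hs : ((higherBlock M x').1 i).isSome := (hb_isSome_iff x' i).mpr (by simp [hx])
    obtain ⟨b, hb⟩ := Option.isSome_iff_exists.mp hs
    rw [hb, hb_eq_some_iff]
    obtain ⟨hb1, hb2⟩ := (hb_eq_some_iff x' i b).mp hb
    refine ⟨by rw [h i hik]; exact hb1, fun j => ?_⟩
    have hpos : i - (M : ℤ) + 1 + ((j : ℕ) : ℤ) ≤ k := by have := j.isLt; omega
    rw [hb2 j]
    exact (h _ hpos).symm

lemma hb_shift (x : SigmaZ A) : higherBlock M (shift x) = shift (higherBlock M x) := by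
  apply Subtype.ext; funext i
  show (higherBlock M (shift x)).1 i = (higherBlock M x).1 (i + 1)
  cases hx : x.1 (i + 1) with
  | none =>
    have h1 : (shift x).1 i = none := hx
    rw [(hb_none_iff _ _).mpr h1, (hb_none_iff _ _).mpr hx]
  | some a =>
    have hs : ((higherBlock M x).1 (i + 1)).isSome :=
      (hb_isSome_iff x (i + 1)).mpr (by simp [hx])
    obtain ⟨b, hb⟩ := Option.isSome_iff_exists.mp hs
    rw [hb, hb_eq_some_iff]
    obtain ⟨hb1, hb2⟩ := (hb_eq_some_iff x (i + 1) b).mp hb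
    refine ⟨by show (x.1 (i + 1)).isSome; simp [hx], fun j => ?_⟩
    show b.1 j = x.1 (i - M + 1 + (j : ℕ) + 1)
    rw [hb2 j]
    exact congrArg x.1 (by omega)

/-- The sequence of blocks read off from an `A`-valued sequence of letters. -/
def blockSeq (M : ℕ) (w : ℤ → A) : ℤ → HBAlphabet A M := fun i =>
  ⟨fun j => some (w (i - M + 1 + (j : ℕ))), fun _ _ _ h => by simp at h⟩

/-- The block obtained at position `k+1` from the letters of `w` and last letter `a`. -/
def hbBlock (M : ℕ) (k : ℤ) (w : ℤ → A) (a : A) : HBAlphabet A M :=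
  ⟨fun j => if (j : ℕ) = M - 1 then some a else some (w (k + 2 - M + (j : ℕ))),
   fun j j' _ h => absurd h (by by_cases hj : (j : ℕ) = M - 1 <;> simp [hj])⟩

noncomputable def hbFinset (M : ℕ) (k : ℤ) (w : ℤ → A) (F : Finset A) :
    Finset (HBAlphabet A M) :=
  letI := Classical.decEq (HBAlphabet A M)
  F.image (hbBlock M k w)

lemma mem_cyl_iff (hM : 1 ≤ M) (x : SigmaZ A) (k : ℤ) (w : ℤ → A) (F : Finset A) :
    x ∈ cyl k w F ↔ higherBlock M x ∈ cyl k (blockSeq M w) (hbFinset M k w F) := by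
  classical
  constructor
  · rintro ⟨h1, h2⟩
    have hx : ∀ i ≤ k, (x.1 i).isSome := fun i hi => by simp [h1 i hi]
    refine ⟨fun i hi => ?_, ?_⟩
    · rw [hb_eq_some_iff]
      refine ⟨hx i hi, fun j => ?_⟩
      show some (w (i - M + 1 + (j : ℕ))) = x.1 (i - M + 1 + (j : ℕ))
      have hpos : i - (M : ℤ) + 1 + ((j : ℕ) : ℤ) ≤ k := by have := j.isLt; omega
      exact (h1 _ hpos).symm
    · intro b hbmem hcontra
      unfold hbFinset at hbmem
      obtain ⟨a, haF, rfl⟩ := Finset.mem_image.mp hbmem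
      have h3 := (hb_eq_some_iff x (k + 1) _).mp hcontra
      have h4 : (hbBlock M k w a).1 ⟨M - 1, by omega⟩ =
          x.1 (k + 1 - (M : ℤ) + 1 + ((M - 1 : ℕ) : ℤ)) := h3.2 ⟨M - 1, by omega⟩
      have h5 : (hbBlock M k w a).1 ⟨M - 1, by omega⟩ = some a := by
        show (if (M - 1 : ℕ) = M - 1 then some a
          else some (w (k + 2 - M + ((M - 1 : ℕ) : ℤ)))) = some a
        rw [if_pos rfl]
      have h6 : x.1 (k + 1 - (M : ℤ) + 1 + ((M - 1 : ℕ) : ℤ)) = some a := h4.symm.trans h5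
      have hidx : k + 1 - (M : ℤ) + 1 + ((M - 1 : ℕ) : ℤ) = k + 1 := by omega
      rw [hidx] at h6
      exact h2 a haF h6
  · rintro ⟨h1, h2⟩
    have hx : ∀ i ≤ k, x.1 i = some (w i) := by
      intro i hi
      have h3 := (hb_eq_some_iff x i _).mp (h1 i hi)
      have h4 : x.1 (i - (M : ℤ) + 1 + ((M - 1 : ℕ) : ℤ)) =
          some (w (i - (M : ℤ) + 1 + ((M - 1 : ℕ) : ℤ))) := (h3.2 ⟨M - 1, by omega⟩).symm
      have hidx : i - (M : ℤ) + 1 + ((M - 1 : ℕ) : ℤ) = i := by omega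
      rw [hidx] at h4
      exact h4
    refine ⟨hx, fun a haF hcontra => ?_⟩
    refine h2 (hbBlock M k w a) ?_ ?_
    · unfold hbFinset
      exact Finset.mem_image.mpr ⟨a, haF, rfl⟩
    · rw [hb_eq_some_iff]
      refine ⟨by simp [hcontra], fun j => ?_⟩
      show (if (j : ℕ) = M - 1 then some a else some (w (k + 2 - M + (j : ℕ)))) =
        x.1 (k + 1 - M + 1 + (j : ℕ))
      by_cases hj : (j : ℕ) = M - 1
      · rw [if_pos hj]
        have hidx : k + 1 - (M : ℤ) + 1 + ((j : ℕ) : ℤ) = k + 1 := by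
          have := j.isLt; omega
        rw [hidx, hcontra]
      · rw [if_neg hj]
        have hpos : k + 2 - (M : ℤ) + ((j : ℕ) : ℤ) ≤ k := by have := j.isLt; omega
        have hidx : k + 1 - (M : ℤ) + 1 + ((j : ℕ) : ℤ) = k + 2 - (M : ℤ) + ((j : ℕ) : ℤ) := by
          ring
        rw [hidx, hx _ hpos]

lemma mem_cyl_empty_iff (hM : 1 ≤ M) (x : SigmaZ A) (k : ℤ) (w : ℤ → A) :
    x ∈ cyl k w (∅ : Finset A) ↔
      higherBlock M x ∈ cyl k (blockSeq M w) (∅ : Finset (HBAlphabet A M)) := by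
  have h := mem_cyl_iff hM x k w ∅
  rwa [show hbFinset M k w ∅ = ∅ from by simp [hbFinset]] at h

set_option maxHeartbeats 2000000 in
lemma exists_preimage (hM : 1 ≤ M) (y : SigmaZ (HBAlphabet A M))
    (ha : ∀ (i : ℤ) (b : HBAlphabet A M), y.1 i = some b → (b.1 ⟨M - 1, Nat.sub_lt hM Nat.one_pos⟩).isSome)
    (hc : ∀ (i : ℤ) (b b' : HBAlphabet A M), y.1 i = some b → y.1 (i + 1) = some b' →
      ∀ (j : ℕ) (hj : j + 1 < M), b'.1 ⟨j, by omega⟩ = b.1 ⟨j + 1, hj⟩) :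
    ∃ x : SigmaZ A, higherBlock M x = y := by
  have key : ∀ (n : ℕ), n ≤ M - 1 → ∀ (i : ℤ) (b : HBAlphabet A M), y.1 i = some b →
      (y.1 (i - (n : ℕ))).bind (fun b' => b'.1 ⟨M - 1, by omega⟩) =
        b.1 ⟨M - 1 - n, by omega⟩ := by
    intro n
    induction n with
    | zero =>
      intro _ i b hy
      simp only [Nat.cast_zero, sub_zero, hy]
      rfl
    | succ m ih =>
      intro hm i b hy
      have hy' : ∃ b', y.1 (i - 1) = some b' := by
        cases h' : y.1 (i - 1) with
        | none =>
          have h2 := none_mono y (by omega : i - 1 ≤ i) h'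
          rw [hy] at h2; simp at h2
        | some b' => exact ⟨b', rfl⟩
      obtain ⟨b', hb'⟩ := hy'
      have step := hc (i - 1) b' b hb' (by rw [sub_add_cancel]; exact hy)
        (M - 1 - (m + 1)) (by omega)
      have ihres := ih (by omega) (i - 1) b' hb'
      have hidx : i - ((m + 1 : ℕ) : ℤ) = i - 1 - (m : ℕ) := by push_cast; ring
      rw [hidx, ihres]
      have e1 : (⟨M - 1 - (m + 1) + 1, by omega⟩ : Fin M) = ⟨M - 1 - m, by omega⟩ :=
        Fin.ext (show M - 1 - (m + 1) + 1 = M - 1 - m by omega)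
      have e2 : (⟨M - 1 - (m + 1), by omega⟩ : Fin M) = ⟨M - 1 - (m + 1), by omega⟩ := rfl
      calc b'.1 ⟨M - 1 - m, by omega⟩
          = b'.1 ⟨M - 1 - (m + 1) + 1, by omega⟩ := congrArg b'.1 e1.symm
        _ = b.1 ⟨M - 1 - (m + 1), by omega⟩ := by exact step.symm
  refine ⟨⟨fun i => (y.1 i).bind (fun b => b.1 ⟨M - 1, by omega⟩), ?_⟩, ?_⟩
  · intro i h
    cases hy : y.1 i with
    | none => simp [y.2 i hy]
    | some b =>
      exfalso
      have h1 := ha i b hy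
      dsimp only at h
      rw [hy] at h
      have h2 : b.1 ⟨M - 1, by omega⟩ = none := h
      rw [h2] at h1
      simp at h1
  · apply Subtype.ext; funext i
    show (higherBlock M _).1 i = y.1 i
    cases hy : y.1 i with
    | none =>
      exact (hb_none_iff _ i).mpr (show (y.1 i).bind _ = none by simp [hy])
    | some b =>
      refine (hb_eq_some_iff _ i b).mpr ?_
      constructor
      · show ((y.1 i).bind _).isSome
        rw [hy]
        simpa using ha i b hy
      · intro j
        have hkey := key (M - 1 - (j : ℕ)) (by omega) i b hy
        have e1 : (⟨M - 1 - (M - 1 - (j : ℕ)), by omega⟩ : Fin M) = j :=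
          Fin.ext (show M - 1 - (M - 1 - (j : ℕ)) = (j : ℕ) by have := j.isLt; omega)
        have e2 : i - ((M - 1 - (j : ℕ) : ℕ) : ℤ) = i - M + 1 + ((j : ℕ) : ℤ) := by
          have := j.isLt; omega
        calc b.1 j = b.1 ⟨M - 1 - (M - 1 - (j : ℕ)), by omega⟩ := congrArg b.1 e1.symm
          _ = (y.1 (i - ((M - 1 - (j : ℕ) : ℕ) : ℤ))).bind
              (fun b' => b'.1 ⟨M - 1, by omega⟩) := hkey.symm
          _ = (y.1 (i - M + 1 + ((j : ℕ) : ℤ))).bind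
              (fun b' => b'.1 ⟨M - 1, by omega⟩) :=
            congrArg (fun t => (y.1 t).bind fun b' => b'.1 ⟨M - 1, by omega⟩) e2

lemma exists_open_of_mem_open (hM : 1 ≤ M) {V : Set (SigmaZ A)} (hV : IsOpen V) :
    ∀ x₀ ∈ V, ∃ U : Set (SigmaZ (HBAlphabet A M)), IsOpen U ∧ higherBlock M x₀ ∈ U ∧
      ∀ x : SigmaZ A, higherBlock M x ∈ U → x ∈ V := by
  have hV' : TopologicalSpace.GenerateOpen (basicSets A) V := hV
  clear hV
  induction hV' with
  | @basic s hs =>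
    intro x₀ hx₀
    rcases hs with ⟨k, w, F, rfl⟩ | ⟨n, ks, ws, rfl⟩
    · exact ⟨cyl k (blockSeq M w) (hbFinset M k w F), isOpen_cyl _ _ _,
        (mem_cyl_iff hM x₀ k w F).mp hx₀, fun x hx => (mem_cyl_iff hM x k w F).mpr hx⟩
    · refine ⟨(⋃ j, cyl (ks j) (blockSeq M (ws j)) ∅)ᶜ,
        isOpen_basic (Or.inr ⟨n, ks, fun j => blockSeq M (ws j), rfl⟩), ?_, ?_⟩
      · intro hmem
        apply hx₀
        obtain ⟨t, ⟨j, rfl⟩, hj⟩ := hmem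
        exact ⟨cyl (ks j) (ws j) ∅, ⟨j, rfl⟩, (mem_cyl_empty_iff hM x₀ (ks j) (ws j)).mpr hj⟩
      · intro x hx hmem
        apply hx
        obtain ⟨t, ⟨j, rfl⟩, hj⟩ := hmem
        exact ⟨cyl (ks j) (blockSeq M (ws j)) ∅, ⟨j, rfl⟩,
          (mem_cyl_empty_iff hM x (ks j) (ws j)).mp hj⟩
  | univ => exact fun x₀ _ => ⟨Set.univ, isOpen_univ, trivial, fun _ _ => trivial⟩
  | inter s t _ _ ihs iht =>
    intro x₀ hx₀
    obtain ⟨U1, h1, h2, h3⟩ := ihs x₀ hx₀.1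
    obtain ⟨U2, h4, h5, h6⟩ := iht x₀ hx₀.2
    exact ⟨U1 ∩ U2, h1.inter h4, ⟨h2, h5⟩, fun x hx => ⟨h3 x hx.1, h6 x hx.2⟩⟩
  | sUnion S _ ih =>
    intro x₀ hx₀
    obtain ⟨s, hsS, hxs⟩ := hx₀
    obtain ⟨U, h1, h2, h3⟩ := ih s hsS x₀ hxs
    exact ⟨U, h1, h2, fun x hx => ⟨s, hsS, h3 x hx⟩⟩

lemma isClosed_preimage_cyl [Nonempty A] (hM : 1 ≤ M) (k : ℤ) (W : ℤ → HBAlphabet A M) :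
    IsClosed (higherBlock M ⁻¹' cyl k W (∅ : Finset (HBAlphabet A M)) : Set (SigmaZ A)) := by
  by_cases hne : (higherBlock M ⁻¹' cyl k W (∅ : Finset (HBAlphabet A M))).Nonempty
  · obtain ⟨x₀, hx₀⟩ := hne
    have hx1 : ∀ i ≤ k, (higherBlock M x₀).1 i = some (W i) := hx₀.1
    have hxk : (x₀.1 k).isSome :=
      (hb_isSome_iff x₀ k).mp (by rw [hx1 k le_rfl]; rfl)
    have heq : higherBlock M ⁻¹' cyl k W (∅ : Finset (HBAlphabet A M)) =
        {z : SigmaZ A | (∀ j ≤ k, z.1 j = x₀.1 j) ∧ ∀ a ∈ (∅ : Finset A),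
          z.1 (k + 1) ≠ some a} := by
      ext x
      constructor
      · rintro ⟨h1, -⟩
        refine ⟨fun i hi => ?_, by simp⟩
        have e1 := hb_bind_last hM x i
        rw [h1 i hi] at e1
        have e2 := hb_bind_last hM x₀ i
        rw [hx1 i hi] at e2
        exact e1.symm.trans e2
      · rintro ⟨h1, -⟩
        exact ⟨fun i hi => (hb_agree h1 hi).trans (hx1 i hi), by simp⟩
    rw [heq, pin_eq_cyl k x₀ hxk ∅]
    exact isClosed_cyl_empty _ _
  · rw [Set.not_nonempty_iff_eq_empty.mp hne]
    exact isClosed_empty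

lemma continuous_higherBlock [Nonempty A] (hM : 1 ≤ M) :
    Continuous (higherBlock M : SigmaZ A → SigmaZ (HBAlphabet A M)) := by
  apply continuous_generateFrom_iff.mpr
  intro s hs
  rcases hs with ⟨k, W, Fb, rfl⟩ | ⟨n, ks, ws, rfl⟩
  · rw [isOpen_iff_forall_mem_open]
    intro x hx
    obtain ⟨hx1, hx2⟩ := hx
    have hxk : (x.1 k).isSome :=
      (hb_isSome_iff x k).mp (by rw [hx1 k le_rfl]; rfl)
    by_cases hk1 : (x.1 (k + 1)).isSome
    · refine ⟨{z : SigmaZ A | (∀ j ≤ k + 1, z.1 j = x.1 j) ∧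
        ∀ a ∈ (∅ : Finset A), z.1 (k + 1 + 1) ≠ some a}, ?_, isOpen_pin (k + 1) x hk1 ∅,
        fun j _ => rfl, by simp⟩
      rintro z ⟨hz, -⟩
      constructor
      · intro i hi
        exact (hb_agree hz (by omega : i ≤ k + 1)).trans (hx1 i hi)
      · intro b hbF
        rw [hb_agree hz (le_refl (k + 1))]
        exact hx2 b hbF
    · have hk1' : x.1 (k + 1) = none := Option.not_isSome_iff_eq_none.mp hk1
      classical
      refine ⟨{z : SigmaZ A | (∀ j ≤ k, z.1 j = x.1 j) ∧
        ∀ a ∈ Fb.image (fun b => (b.1 ⟨M - 1, by omega⟩).getD (Classical.arbitrary A)),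
          z.1 (k + 1) ≠ some a}, ?_, isOpen_pin k x hxk _,
        fun j _ => rfl, fun a _ => by rw [hk1']; simp⟩
      rintro z ⟨hz1, hz2⟩
      constructor
      · intro i hi
        exact (hb_agree hz1 hi).trans (hx1 i hi)
      · intro b hbF hcon
        have hzk1 : (z.1 (k + 1)).isSome := (hb_isSome_iff z (k + 1)).mp (by rw [hcon]; rfl)
        obtain ⟨c, hcz⟩ := Option.isSome_iff_exists.mp hzk1
        have h5 : b.1 ⟨M - 1, by omega⟩ = some c := by
          have h6 := hb_bind_last hM z (k + 1)
          rw [hcon, hcz] at h6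
          exact h6
        refine hz2 c (Finset.mem_image.mpr ⟨b, hbF, ?_⟩) hcz
        rw [h5]
        rfl
  · rw [Set.preimage_compl, ← isClosed_compl_iff, compl_compl, Set.preimage_iUnion]
    exact isClosed_iUnion_of_finite fun j => isClosed_preimage_cyl hM (ks j) (ws j)

lemma isClosed_image [Nonempty A] (hM : 1 ≤ M) {Lam : Set (SigmaZ A)} (hcl : IsClosed Lam) :
    IsClosed (higherBlock M '' Lam) := by
  rw [← isOpen_compl_iff, isOpen_iff_forall_mem_open]
  intro y hy
  by_cases hA : ∀ (i : ℤ) (b : HBAlphabet A M), y.1 i = some b → (b.1 ⟨M - 1, by omega⟩).isSome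
  · by_cases hB : ∀ (i : ℤ) (b b' : HBAlphabet A M), y.1 i = some b → y.1 (i + 1) = some b' →
        ∀ (j : ℕ) (hj : j + 1 < M), b'.1 ⟨j, by omega⟩ = b.1 ⟨j + 1, hj⟩
    · obtain ⟨x₀, rfl⟩ := exists_preimage hM y hA hB
      have hx₀ : x₀ ∉ Lam := fun h => hy ⟨x₀, h, rfl⟩
      obtain ⟨U, h1, h2, h3⟩ := exists_open_of_mem_open hM hcl.isOpen_compl x₀ hx₀
      refine ⟨U, ?_, h1, h2⟩
      rintro z hz ⟨x, hxL, rfl⟩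
      exact h3 x hz hxL
    · push_neg at hB
      obtain ⟨i, b, b', hib, hib', j, hj, hne⟩ := hB
      have hsome : (y.1 (i + 1)).isSome := by simp [hib']
      refine ⟨{z : SigmaZ (HBAlphabet A M) | (∀ p ≤ i + 1, z.1 p = y.1 p) ∧
        ∀ a ∈ (∅ : Finset (HBAlphabet A M)), z.1 (i + 1 + 1) ≠ some a}, ?_,
        isOpen_pin (i + 1) y hsome ∅, fun p _ => rfl, by simp⟩
      rintro z ⟨hz, -⟩ ⟨x, hxL, rfl⟩
      have e1 : (higherBlock M x).1 i = some b := (hz i (by omega)).trans hib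
      have e2 : (higherBlock M x).1 (i + 1) = some b' := (hz (i + 1) le_rfl).trans hib'
      have f1 := ((hb_eq_some_iff x i b).mp e1).2 ⟨j + 1, hj⟩
      have f2 := ((hb_eq_some_iff x (i + 1) b').mp e2).2 ⟨j, by omega⟩
      have hidx : i + 1 - (M : ℤ) + 1 + ((j : ℕ) : ℤ) =
          i - (M : ℤ) + 1 + (((j + 1 : ℕ)) : ℤ) := by push_cast; ring
      exact hne (f2.trans ((congrArg x.1 hidx).trans f1.symm))
  · push_neg at hA
    obtain ⟨i, b, hib, hlast⟩ := hA
    have hsome : (y.1 i).isSome := by simp [hib]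
    refine ⟨{z : SigmaZ (HBAlphabet A M) | (∀ p ≤ i, z.1 p = y.1 p) ∧
      ∀ a ∈ (∅ : Finset (HBAlphabet A M)), z.1 (i + 1) ≠ some a}, ?_,
      isOpen_pin i y hsome ∅, fun p _ => rfl, by simp⟩
    rintro z ⟨hz, -⟩ ⟨x, hxL, rfl⟩
    have e1 : (higherBlock M x).1 i = some b := (hz i le_rfl).trans hib
    have h1 : (x.1 i).isSome := ((hb_eq_some_iff x i b).mp e1).1
    have h2 := hb_bind_last hM x i
    rw [e1] at h2
    have h2' : b.1 ⟨M - 1, by omega⟩ = x.1 i := h2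
    apply hlast
    rw [← h2'] at h1
    exact h1

end Aux

/-- The `M`-th higher block code restricted to a shift space `Λ` is continuous and
injective, its inverse on its image is the 1-block code reading off the last letter
of each block, and the image `Ξ^[M](Λ)` is a shift space over `A^[M]`. -/
theorem stmt17 {A : Type u} [Countable A] [Infinite A] (M : ℕ) (hM : 1 ≤ M)
    (Lam : Set (SigmaZ A)) (hLam : IsShiftSpace Lam) :
    ContinuousOn (higherBlock M : SigmaZ A → SigmaZ (HBAlphabet A M)) Lam ∧
    Set.InjOn (higherBlock M) Lam ∧
    (∀ x ∈ Lam, ∀ i : ℤ,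
      x.1 i = ((higherBlock M x).1 i).bind (fun w => w.1 ⟨M - 1, by omega⟩)) ∧
    IsShiftSpace (higherBlock M '' Lam) := by
  have hne : Nonempty A := inferInstance
  have hcont : Continuous (higherBlock M : SigmaZ A → SigmaZ (HBAlphabet A M)) :=
    continuous_higherBlock hM
  refine ⟨hcont.continuousOn, ?_, ?_, ?_⟩
  · intro x _ x' _ h
    apply Subtype.ext; funext i
    have h1 := hb_bind_last hM x i
    rw [h] at h1
    exact h1.symm.trans (hb_bind_last hM x' i)
  · intro x _ i
    exact (hb_bind_last hM x i).symm
  · refine ⟨isClosed_image hM hLam.1, ?_, ?_⟩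
    · calc shift '' (higherBlock M '' Lam)
          = (shift ∘ higherBlock M) '' Lam := by rw [Set.image_comp]
        _ = (higherBlock M ∘ shift) '' Lam := by
            rw [show (shift ∘ higherBlock M : SigmaZ A → SigmaZ (HBAlphabet A M)) =
              higherBlock M ∘ shift from funext fun x => (hb_shift x).symm]
        _ = higherBlock M '' (shift '' Lam) := Set.image_comp _ _ _
        _ = higherBlock M '' Lam := by rw [hLam.2.1]
    · rintro y ⟨x, hxL, rfl⟩
      have h1 : x ∈ closure {x ∈ Lam | ∀ i, x.1 i ≠ none} := hLam.2.2 hxL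
      have h2 : higherBlock M x ∈
          closure (higherBlock M '' {x ∈ Lam | ∀ i, x.1 i ≠ none}) :=
        image_closure_subset_closure_image hcont ⟨x, h1, rfl⟩
      refine closure_mono ?_ h2
      rintro z ⟨x', ⟨hx'L, hx'⟩, rfl⟩
      exact ⟨⟨x', hx'L, rfl⟩, fun i hn => hx' i ((hb_none_iff x' i).mp hn)⟩

end SigmaZ
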